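/- arXiv:2210.05592 — 3 statements merged into one kernel-verified Lean document; each statement's English description precedes it below -/
import Mathlib

section
/- Let N be a finite nonempty set, let ζ ≥ 0 be a real number, and let h : N → ℝ satisfy h(n) ∈ {0,1} for all n. Then: (i) if h(n) = 1 for all n ∈ N, the quantity ζ − ζ·(|N| − Σ_{n∈N} h(n)) equals ζ; (ii) if h(n) = 0 for at least one n ∈ N, then ζ − ζ·(|N| − Σ_{n∈N} h(n)) ≤ 0. Consequently, a real number z satisfies z ≥ 0 and z ≥ ζ − ζ·(|N| − Σ_{n∈N} h(n)) if and only if z ≥ B(h), where B(h) = ζ when h is identically 1 on N and B(h) = 0 otherwise; in particular the smallest such z equals B(h). -/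
/- Correctness of the linear optimality cuts
z ≥ ζ − ζ·(|N| − Σ_{n∈N} h(n)) added to the Benders master problem. -/
open Classical in
theorem lbbd_optimality_cut_correct
    {N : Type*} [Fintype N] [Nonempty N]
    (ζ : ℝ) (hζ : 0 ≤ ζ)
    (h : N → ℝ) (hbin : ∀ n : N, h n = 0 ∨ h n = 1) :
    ((∀ n : N, h n = 1) →
        ζ - ζ * ((Fintype.card N : ℝ) - ∑ n : N, h n) = ζ) ∧
    ((∃ n : N, h n = 0) →
        ζ - ζ * ((Fintype.card N : ℝ) - ∑ n : N, h n) ≤ 0) ∧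
    (∀ z : ℝ,
      (0 ≤ z ∧ ζ - ζ * ((Fintype.card N : ℝ) - ∑ n : N, h n) ≤ z) ↔
        (if ∀ n : N, h n = 1 then ζ else 0) ≤ z) ∧
    IsLeast {z : ℝ | 0 ≤ z ∧ ζ - ζ * ((Fintype.card N : ℝ) - ∑ n : N, h n) ≤ z}
      (if ∀ n : N, h n = 1 then ζ else 0) := by
  have hall : (∀ n : N, h n = 1) →
      ζ - ζ * ((Fintype.card N : ℝ) - ∑ n : N, h n) = ζ := by
    intro hone
    have : (∑ n : N, h n) = (Fintype.card N : ℝ) := by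
      rw [Finset.sum_congr rfl (fun n _ => hone n)]
      simp
    rw [this]; ring
  have hsome : (∃ n : N, h n = 0) →
      ζ - ζ * ((Fintype.card N : ℝ) - ∑ n : N, h n) ≤ 0 := by
    rintro ⟨m, hm⟩
    have hsum : (∑ n : N, h n) ≤ (Fintype.card N : ℝ) - 1 := by
      have : (∑ n : N, h n) = ∑ n ∈ Finset.univ.erase m, h n := by
        rw [← Finset.add_sum_erase _ _ (Finset.mem_univ m), hm, zero_add]
      rw [this]
      calc ∑ n ∈ Finset.univ.erase m, h n ≤ ∑ n ∈ Finset.univ.erase m, (1:ℝ) :=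
            Finset.sum_le_sum (fun n _ => by rcases hbin n with h0 | h0 <;> simp [h0])
        _ = ((Finset.univ.erase m).card : ℝ) := by simp
        _ = (Fintype.card N : ℝ) - 1 := by
            rw [Finset.card_erase_of_mem (Finset.mem_univ m)]
            have h1 : 1 ≤ (Finset.univ : Finset N).card := Fintype.card_pos
            rw [Nat.cast_sub h1, Nat.cast_one, Finset.card_univ]
    nlinarith
  refine ⟨hall, hsome, ?_, ?_⟩
  · intro z
    by_cases hc : ∀ n : N, h n = 1
    · rw [if_pos hc, hall hc]
      constructor
      · exact fun ⟨_, h2⟩ => h2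
      · exact fun hz => ⟨le_trans hζ hz, hz⟩
    · rw [if_neg hc]
      push_neg at hc
      obtain ⟨m, hm⟩ := hc
      have hm0 : h m = 0 := (hbin m).resolve_right hm
      constructor
      · exact fun ⟨h1, _⟩ => h1
      · exact fun hz => ⟨hz, le_trans (hsome ⟨m, hm0⟩) hz⟩
  · constructor
    · by_cases hc : ∀ n : N, h n = 1
      · rw [if_pos hc]
        exact ⟨hζ, le_of_eq (hall hc)⟩
      · rw [if_neg hc]
        push_neg at hc
        obtain ⟨m, hm⟩ := hc
        exact ⟨le_refl 0, hsome ⟨m, (hbin m).resolve_right hm⟩⟩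
    · intro z hz
      by_cases hc : ∀ n : N, h n = 1
      · rw [if_pos hc]; have h2 := hz.2; rw [hall hc] at h2; exact h2
      · rw [if_neg hc]; exact hz.1
end

section
/- Let D be a finite nonempty set, f : D → ℝ, ε : D → ℝ with ε ≥ 0, let x_1, …, x_r ∈ D, and for each k ≤ r let B_k : D → ℝ satisfy B_k(x) ≤ f(x) + ε(x) for every x ∈ D (validity) and B_k(x_k) = f(x_k) + ε(x_k) (tightness at x_k). Define L_r(x) = max(f(x), max_{1≤k≤r} B_k(x)) and OPT = min_{x∈D}(f(x)+ε(x)). If x* ∈ D minimizes L_r over D and x* = x_k for some k ≤ r, then L_r(x*) = OPT and f(x*) + ε(x*) = OPT; that is, the master lower bound equals the optimal value and x* is an optimal solution of the original problem. -/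
/- If the minimizer of the cut-augmented master problem repeats a previously
explored master solution, the master lower bound equals the optimal value
of the original problem and the minimizer is optimal. -/
theorem lbbd_termination_optimal
    {D : Type*} [Fintype D] [Nonempty D]
    (f ε : D → ℝ) (hε : ∀ x : D, 0 ≤ ε x)
    (r : ℕ) (hr : 0 < r)
    (xs : Fin r → D)
    (B : Fin r → D → ℝ)
    (hvalid : ∀ (k : Fin r) (x : D), B k x ≤ f x + ε x)
    (htight : ∀ k : Fin r, B k (xs k) = f (xs k) + ε (xs k))
    (L : D → ℝ)
    (hL : ∀ x : D,
      L x = max (f x)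
        ((Finset.univ : Finset (Fin r)).sup'
          (Finset.univ_nonempty_iff.mpr ⟨⟨0, hr⟩⟩) (fun k => B k x)))
    (xstar : D)
    (hmin : ∀ y : D, L xstar ≤ L y)
    (hrepeat : ∃ k : Fin r, xstar = xs k) :
    L xstar = Finset.univ.inf' Finset.univ_nonempty (fun x : D => f x + ε x) ∧
      f xstar + ε xstar =
        Finset.univ.inf' Finset.univ_nonempty (fun x : D => f x + ε x) := by
  obtain ⟨k, hk⟩ := hrepeat
  -- L y ≤ f y + ε y for all y
  have hLle : ∀ y : D, L y ≤ f y + ε y := by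
    intro y
    rw [hL y]
    apply max_le
    · linarith [hε y]
    · exact Finset.sup'_le _ _ fun j _ => hvalid j y
  -- L xstar ≥ f xstar + ε xstar via tightness
  have hge : f xstar + ε xstar ≤ L xstar := by
    rw [hL xstar]
    calc f xstar + ε xstar = B k xstar := by rw [hk, htight k]
    _ ≤ _ := le_max_of_le_right (Finset.le_sup' (fun j => B j xstar) (Finset.mem_univ k))
  have heq : L xstar = f xstar + ε xstar := le_antisymm (hLle xstar) hge
  have hopt : L xstar = Finset.univ.inf' Finset.univ_nonempty (fun x : D => f x + ε x) := by
    apply le_antisymm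
    · exact Finset.le_inf' _ _ fun y _ => le_trans (hmin y) (hLle y)
    · exact le_trans (Finset.inf'_le _ (Finset.mem_univ xstar)) hge
  exact ⟨hopt, heq ▸ hopt⟩
end

section
/- Let D be a finite nonempty set, f : D → ℝ, ε : D → ℝ with ε ≥ 0, and suppose for every x̂ ∈ D there is a function B_{x̂} : D → ℝ with B_{x̂}(x) ≤ f(x) + ε(x) for all x ∈ D and B_{x̂}(x̂) = f(x̂) + ε(x̂). Let (x_r)_{r≥0} be any sequence in D such that x_0 minimizes f over D and, for every r ≥ 0, x_{r+1} minimizes L_r(x) := max(f(x), max_{0≤k≤r} B_{x_k}(x)) over D. Then there exists r ≤ |D| such that min_{x∈D} L_r(x) = min_{x∈D}(f(x) + ε(x)) and x_{r+1} attains this minimum of f + ε; that is, the Logic-Based Benders algorithm converges to the optimal solution of the original problem after at most |D| + 1 master iterations. (Theorem 1.) -/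
/-!
Validity of the cuts makes every master objective `L r` a lower bound for the true cost `f + ε`,
and tightness makes it exact at every master solution already visited. By pigeonhole, two of
`x 0, …, x |D|` coincide, say `x i = x (r + 1)` with `i ≤ r`; then `x (r + 1)` minimizes `L r`
and `L r` agrees with `f + ε` there, so it minimizes `f + ε` and the two minima are equal.
-/

open Finset

theorem Fintype.exists_lt_le_card_map_eq {D : Type*} [Fintype D] (x : ℕ → D) :
    ∃ i j, i < j ∧ j ≤ Fintype.card D ∧ x i = x j := by
  obtain ⟨a, b, hab, hx⟩ := Fintype.exists_ne_map_eq_of_card_lt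
    (fun k : Fin (Fintype.card D + 1) => x k) (by simp)
  rcases Fin.lt_or_lt_of_ne hab with hlt | hlt
  · exact ⟨a, b, hlt, Nat.lt_succ_iff.mp b.2, hx⟩
  · exact ⟨b, a, hlt, Nat.lt_succ_iff.mp a.2, hx.symm⟩

theorem Finset.inf'_eq_inf'_of_le_of_forall_le {D α : Type*} [SemilatticeInf α] {s : Finset D}
    (hs : s.Nonempty) {g h : D → α} (hgh : ∀ y ∈ s, g y ≤ h y) {z : D} (hz : z ∈ s)
    (hzg : ∀ y ∈ s, h z ≤ g y) : s.inf' hs g = s.inf' hs h :=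
  le_antisymm (le_inf' hs h fun y hy => inf'_le_of_le g hy (hgh y hy))
    (inf'_le_of_le h hz (le_inf' hs g hzg))

section BendersMaster

variable {D α : Type*} [LinearOrder α] (f : D → α) (B : D → D → α) (x : ℕ → D)

def bendersMasterObjective (r : ℕ) (z : D) : α :=
  max (f z) ((range (r + 1)).sup' nonempty_range_add_one fun k => B (x k) z)

variable {f B} {c : D → α}

theorem bendersMasterObjective_le (hf : ∀ z, f z ≤ c z) (hvalid : ∀ xhat z, B xhat z ≤ c z)
    (r : ℕ) (z : D) : bendersMasterObjective f B x r z ≤ c z :=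
  max_le (hf z) (sup'_le _ _ fun k _ => hvalid (x k) z)

theorem le_bendersMasterObjective (htight : ∀ xhat, B xhat xhat = c xhat) {i r : ℕ}
    (hir : i ≤ r) : c (x i) ≤ bendersMasterObjective f B x r (x i) :=
  le_max_of_le_right <| (htight (x i)).ge.trans <|
    le_sup' (fun k => B (x k) (x i)) (mem_range.2 (Nat.lt_succ_of_le hir))

end BendersMaster

theorem lbbd_finite_convergence_general
    {D : Type*} [Fintype D] [Nonempty D]
    (f ε : D → ℝ) (hε : ∀ x : D, 0 ≤ ε x)
    (B : D → D → ℝ)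
    (hvalid : ∀ xhat x : D, B xhat x ≤ f x + ε x)
    (htight : ∀ xhat : D, B xhat xhat = f xhat + ε xhat)
    (x : ℕ → D)
    (L : ℕ → D → ℝ)
    (hL : ∀ (r : ℕ) (z : D),
      L r z = max (f z)
        ((Finset.range (r + 1)).sup' Finset.nonempty_range_add_one
          (fun k => B (x k) z)))
    (hstep : ∀ (r : ℕ) (y : D), L r (x (r + 1)) ≤ L r y) :
    ∃ r : ℕ, r ≤ Fintype.card D ∧
      Finset.univ.inf' Finset.univ_nonempty (L r) =
        Finset.univ.inf' Finset.univ_nonempty (fun z : D => f z + ε z) ∧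
      ∀ y : D, f (x (r + 1)) + ε (x (r + 1)) ≤ f y + ε y := by
  obtain rfl : L = bendersMasterObjective f B x := funext fun r => funext (hL r)
  have hlower := bendersMasterObjective_le x (fun z => le_add_of_nonneg_right (hε z)) hvalid
  obtain ⟨i, j, hij, hjcard, hrepeat⟩ := Fintype.exists_lt_le_card_map_eq x
  obtain ⟨r, rfl⟩ := Nat.exists_eq_add_one_of_ne_zero (Nat.ne_zero_of_lt hij)
  have hopt (y : D) : f (x (r + 1)) + ε (x (r + 1)) ≤ bendersMasterObjective f B x r y := by
    have hexact := le_bendersMasterObjective (f := f) x htight (Nat.le_of_lt_succ hij)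
    rw [hrepeat] at hexact
    exact hexact.trans (hstep r y)
  refine ⟨r, by omega, ?_, fun y => (hopt y).trans (hlower r y)⟩
  exact inf'_eq_inf'_of_le_of_forall_le univ_nonempty (fun y _ => hlower r y) (mem_univ _)
    fun y _ => hopt y

theorem lbbd_finite_convergence
    {D : Type*} [Fintype D] [Nonempty D]
    (f ε : D → ℝ) (hε : ∀ x : D, 0 ≤ ε x)
    (B : D → D → ℝ)
    (hvalid : ∀ xhat x : D, B xhat x ≤ f x + ε x)
    (htight : ∀ xhat : D, B xhat xhat = f xhat + ε xhat)
    (x : ℕ → D)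
    (L : ℕ → D → ℝ)
    (hL : ∀ (r : ℕ) (z : D),
      L r z = max (f z)
        ((Finset.range (r + 1)).sup' Finset.nonempty_range_add_one
          (fun k => B (x k) z)))
    (h0 : ∀ y : D, f (x 0) ≤ f y)
    (hstep : ∀ (r : ℕ) (y : D), L r (x (r + 1)) ≤ L r y) :
    ∃ r : ℕ, r ≤ Fintype.card D ∧
      Finset.univ.inf' Finset.univ_nonempty (L r) =
        Finset.univ.inf' Finset.univ_nonempty (fun z : D => f z + ε z) ∧
      ∀ y : D, f (x (r + 1)) + ε (x (r + 1)) ≤ f y + ε y :=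
  lbbd_finite_convergence_general f ε hε B hvalid htight x L hL hstep
end
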